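/- The S-module N = S^2/U has length 3 (as an S-module). -/

import Mathlib

set_option maxHeartbeats 1000000
set_option synthInstance.maxHeartbeats 400000

open CategoryTheory MvPolynomial

noncomputable section

/-- The ideal `(s², st, t²)` of the polynomial ring `K[s,t]`. -/
def sIdeal (K : Type) [Field K] : Ideal (MvPolynomial (Fin 2) K) :=
  Ideal.span {(X 0) ^ 2, (X 0) * (X 1), (X 1) ^ 2}

/-- The ring `S = K[s,t]/(s², st, t²)`. -/
abbrev Sring (K : Type) [Field K] : Type := MvPolynomial (Fin 2) K ⧸ sIdeal K

/-- The image `s` of the first variable in `S`. -/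
def sElt (K : Type) [Field K] : Sring K := Ideal.Quotient.mk _ (X 0)

/-- The image `t` of the second variable in `S`. -/
def tElt (K : Type) [Field K] : Sring K := Ideal.Quotient.mk _ (X 1)

/-- The submodule `U` of `S²` generated by `(t,0)`, `(0,s)` and `(s,t)`. -/
def Usub (K : Type) [Field K] : Submodule (Sring K) (Fin 2 → Sring K) :=
  Submodule.span _ {![tElt K, 0], ![0, sElt K], ![sElt K, tElt K]}

/-- The module `N = S²/U`. -/
abbrev Nmod (K : Type) [Field K] : Type := (Fin 2 → Sring K) ⧸ Usub K

/-- The maximal ideal `m = (s,t)` of `S`. -/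
def mIdeal (K : Type) [Field K] : Ideal (Sring K) := Ideal.span {sElt K, tElt K}

/-- The matrix `X̄` with rows `(s,0,t,0)` and `(0,s,0,t)`. -/
def Xbar (K : Type) [Field K] : Matrix (Fin 2) (Fin 4) (Sring K) :=
  !![sElt K, 0, tElt K, 0; 0, sElt K, 0, tElt K]

/-- The matrix `Ȳ = (sI₄ | tI₄)`. -/
def Ybar (K : Type) [Field K] : Matrix (Fin 4) (Fin 8) (Sring K) :=
  fun i j => if (j : ℕ) = (i : ℕ) then sElt K
    else if (j : ℕ) = (i : ℕ) + 4 then tElt K else 0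

/-- The `S`-linear map `v ↦ v A` on row vectors with entries in an `S`-module `M`,
for a matrix `A` over `S`. -/
def rowVecMulMap {S : Type} [CommRing S] {M : Type} [AddCommGroup M] [Module S M]
    {a b : ℕ} (A : Matrix (Fin a) (Fin b) S) : (Fin a → M) →ₗ[S] (Fin b → M) where
  toFun v := fun j => ∑ i, A i j • v i
  map_add' u v := by
    funext j
    simp [smul_add, Finset.sum_add_distrib]
  map_smul' c v := by
    funext j
    show (∑ i, A i j • (c • v) i) = c • ∑ i, A i j • v i
    rw [Finset.smul_sum]
    refine Finset.sum_congr rfl fun i _ => ?_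
    rw [Pi.smul_apply, smul_comm]


/-! The chain `0 ⊂ S·se₀ ⊂ S·e₁ + S·se₀ ⊂ N`, where `e₀, e₁` are the images of the standard basis
of `S²`, is a composition series: at each step the new generator is sent into the previous
submodule by `s` and `t`, so the step is a quotient of the simple module `S/m`. The inclusions are
strict because `se₀ ≠ 0`, which is read off from first-order Taylor coefficients, and because
`e₁`, resp. `e₀`, has a unit coordinate while the smaller submodule has its coordinates in `m`. -/

namespace Submodule

variable {R M : Type*} [CommRing R] [AddCommGroup M] [Module R M]

theorem covBy_span_singleton_sup_of_le_colon {I : Ideal R} (hI : I.IsMaximal)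
    {W : Submodule R M} {x : M} (hx : x ∉ W) (hIx : I ≤ W.colon {x}) :
    W ⋖ (R ∙ x) ⊔ W := by
  refine ⟨by simpa, fun V hWV hVx ↦ hVx.not_ge ?_⟩
  obtain ⟨y, hyV, hyW⟩ := SetLike.exists_of_lt hWV
  obtain ⟨c, z, hz, rfl⟩ : ∃ c : R, ∃ z ∈ W, c • x + z = y := by
    simpa [mem_sup, mem_span_singleton] using hVx.le hyV
  have hc : c ∉ I := fun hc ↦ hyW (W.add_mem (mem_colon_singleton.1 (hIx hc)) hz)
  obtain ⟨b, i, hi, hbc⟩ := hI.exists_inv hc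
  have hxV : x ∈ V := by
    have hcx : c • x ∈ V := (V.add_mem_iff_left (hWV.le hz)).1 hyV
    rw [← one_smul R x, ← hbc, add_smul, mul_smul]
    exact V.add_mem (V.smul_mem b hcx) (hWV.le (mem_colon_singleton.1 (hIx hi)))
  exact sup_le ((span_singleton_le_iff_mem x V).2 hxV) hWV.le

end Submodule

open TrivSqZeroExt

variable {K : Type} [Field K]

@[simp] lemma sElt_mul_sElt : sElt K * sElt K = 0 := by
  rw [sElt, ← map_mul, Ideal.Quotient.eq_zero_iff_mem, ← sq]
  exact Ideal.subset_span (by simp)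

@[simp] lemma sElt_mul_tElt : sElt K * tElt K = 0 := by
  rw [sElt, tElt, ← map_mul, Ideal.Quotient.eq_zero_iff_mem]
  exact Ideal.subset_span (by simp)

@[simp] lemma tElt_mul_sElt : tElt K * sElt K = 0 := by
  rw [mul_comm, sElt_mul_tElt]

variable (K) in
/-- The first-order Taylor map `a ↦ (a(0), ∂ₛa(0), ∂ₜa(0))`. -/
def toTrivSqZeroExt : Sring K →ₐ[K] TrivSqZeroExt K (Fin 2 → K) :=
  Ideal.Quotient.liftₐ (sIdeal K) (aeval fun i ↦ inr (Pi.single i 1)) fun _ hp ↦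
    RingHom.mem_ker.1 <| (Ideal.span_le (I := RingHom.ker _)).2
      (by simp [Set.insert_subset_iff, sq, inr_mul_inr]) hp

@[simp] lemma toTrivSqZeroExt_sElt : toTrivSqZeroExt K (sElt K) = inr (Pi.single 0 1) :=
  aeval_X _ 0

@[simp] lemma toTrivSqZeroExt_tElt : toTrivSqZeroExt K (tElt K) = inr (Pi.single 1 1) :=
  aeval_X _ 1

variable (K) in
def augmentation : Sring K →ₐ[K] K :=
  (fstHom K K (Fin 2 → K)).comp (toTrivSqZeroExt K)

lemma exists_sub_algebraMap_mem_mIdeal (a : Sring K) :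
    ∃ c : K, a - algebraMap K (Sring K) c ∈ mIdeal K := by
  obtain ⟨p, rfl⟩ := Ideal.Quotient.mk_surjective a
  refine ⟨constantCoeff p, ?_⟩
  have hp : p - algebraMap K _ (constantCoeff p) ∈ idealOfVars (Fin 2) K := by
    rw [← pow_one (idealOfVars _ _), mem_pow_idealOfVars_iff']
    intro x hx
    simp_all [Finsupp.degree_eq_zero_iff, constantCoeff_eq]
  have hle : idealOfVars (Fin 2) K ≤ (mIdeal K).comap (Ideal.Quotient.mk _) := by
    refine Ideal.span_le.2 (Set.range_subset_iff.2 fun i ↦ ?_)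
    fin_cases i
    · exact Ideal.subset_span (by simp [sElt])
    · exact Ideal.subset_span (by simp [tElt])
  simpa only [Ideal.mem_comap, map_sub, Ideal.Quotient.mk_algebraMap] using hle hp

lemma mIdeal_le_ker_augmentation : mIdeal K ≤ RingHom.ker (augmentation K) :=
  Ideal.span_le.2 (by simp [Set.insert_subset_iff, augmentation])

lemma mIdeal_eq_ker_augmentation : mIdeal K = RingHom.ker (augmentation K) := by
  refine le_antisymm mIdeal_le_ker_augmentation fun a ha ↦ ?_
  obtain ⟨c, hc⟩ := exists_sub_algebraMap_mem_mIdeal a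
  have hc0 : c = 0 := by
    have h := mIdeal_le_ker_augmentation hc
    rw [RingHom.mem_ker, map_sub, RingHom.mem_ker.1 ha, AlgHom.commutes] at h
    simpa using h
  simpa [hc0] using hc

instance mIdeal_isMaximal : (mIdeal K).IsMaximal := by
  rw [mIdeal_eq_ker_augmentation]
  exact RingHom.ker_isMaximal_of_surjective _ fun c ↦ ⟨algebraMap K _ c, by simp⟩

lemma sElt_mem_mIdeal : sElt K ∈ mIdeal K := Ideal.subset_span (by simp)

lemma tElt_mem_mIdeal : tElt K ∈ mIdeal K := Ideal.subset_span (by simp)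

section Module

variable {M : Type*} [AddCommGroup M] [Module (Sring K) M]

theorem covBy_span_singleton_sup_of_smul_mem {W : Submodule (Sring K) M} {x : M} (hx : x ∉ W)
    (hs : sElt K • x ∈ W) (ht : tElt K • x ∈ W) : W ⋖ (Sring K ∙ x) ⊔ W :=
  Submodule.covBy_span_singleton_sup_of_le_colon mIdeal_isMaximal hx
    (Ideal.span_le.2 (by simp [Set.insert_subset_iff, hs, ht]))

lemma sElt_smul_sElt_smul (x : M) : sElt K • sElt K • x = 0 := by
  rw [smul_smul, sElt_mul_sElt]
  exact zero_smul (Sring K) x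

lemma tElt_smul_sElt_smul (x : M) : tElt K • sElt K • x = 0 := by
  rw [smul_smul, tElt_mul_sElt]
  exact zero_smul (Sring K) x

end Module

variable (K) in
def e₀ : Nmod K := Submodule.Quotient.mk ![1, 0]

variable (K) in
def e₁ : Nmod K := Submodule.Quotient.mk ![0, 1]

lemma mk_eq_zero_of_mem_generators {v : Fin 2 → Sring K}
    (hv : v ∈ ({![tElt K, 0], ![0, sElt K], ![sElt K, tElt K]} : Set _)) :
    (Submodule.Quotient.mk v : Nmod K) = 0 :=
  (Submodule.Quotient.mk_eq_zero _).2 (Submodule.subset_span hv)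

lemma sElt_smul_e₀ : sElt K • e₀ K = Submodule.Quotient.mk ![sElt K, 0] := by
  rw [e₀, ← Submodule.Quotient.mk_smul]
  simp

lemma tElt_smul_e₀ : tElt K • e₀ K = 0 := by
  rw [e₀, ← Submodule.Quotient.mk_smul]
  exact mk_eq_zero_of_mem_generators (by simp)

lemma sElt_smul_e₁ : sElt K • e₁ K = 0 := by
  rw [e₁, ← Submodule.Quotient.mk_smul]
  exact mk_eq_zero_of_mem_generators (by simp)

lemma tElt_smul_e₁ : tElt K • e₁ K = -(sElt K • e₀ K) := by
  rw [eq_neg_iff_add_eq_zero, sElt_smul_e₀, e₁, ← Submodule.Quotient.mk_smul,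
    ← Submodule.Quotient.mk_add]
  exact mk_eq_zero_of_mem_generators (by simp)

/-- In a relation `(s, 0) = a (t, 0) + b (0, s) + c (s, t)`, the `s`-coefficient of the first
coordinate and the `t`-coefficient of the second force `c(0) = 1` and `c(0) = 0`. -/
lemma sElt_smul_e₀_ne_zero : sElt K • e₀ K ≠ 0 := by
  rw [sElt_smul_e₀, Ne, Submodule.Quotient.mk_eq_zero, Usub, Submodule.mem_span_insert]
  rintro ⟨a, z, hz, hsz⟩
  obtain ⟨b, c, rfl⟩ := Submodule.mem_span_pair.1 hz
  have h₀ := congrArg (fun v ↦ (toTrivSqZeroExt K (v 0)).snd 0) hsz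
  have h₁ := congrArg (fun v ↦ (toTrivSqZeroExt K (v 1)).snd 1) hsz
  simp at h₀ h₁
  exact one_ne_zero (h₀.trans h₁.symm)

variable (K) in
def coordMod (i : Fin 2) : Nmod K →ₗ[Sring K] Sring K ⧸ mIdeal K :=
  (Usub K).liftQ ((mIdeal K).mkQ ∘ₗ LinearMap.proj i) <| Submodule.span_le.2 <| by
    simp only [Set.insert_subset_iff, Set.singleton_subset_iff]
    refine ⟨?_, ?_, ?_⟩ <;> fin_cases i <;>
      simp [Ideal.Quotient.eq_zero_iff_mem, sElt_mem_mIdeal, tElt_mem_mIdeal]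

lemma coordMod_mk_eq_zero_iff {i : Fin 2} {v : Fin 2 → Sring K} :
    coordMod K i (Submodule.Quotient.mk v) = 0 ↔ v i ∈ mIdeal K :=
  Submodule.Quotient.mk_eq_zero _

variable (K) in
def N₁ : Submodule (Sring K) (Nmod K) := Sring K ∙ sElt K • e₀ K

variable (K) in
def N₂ : Submodule (Sring K) (Nmod K) := (Sring K ∙ e₁ K) ⊔ N₁ K

lemma bot_covBy_N₁ : ⊥ ⋖ N₁ K := by
  simpa [N₁] using covBy_span_singleton_sup_of_smul_mem (W := ⊥)
    (by simpa using sElt_smul_e₀_ne_zero) (by simp [sElt_smul_sElt_smul])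
    (by simp [tElt_smul_sElt_smul])

lemma N₁_covBy_N₂ : N₁ K ⋖ N₂ K := by
  refine covBy_span_singleton_sup_of_smul_mem (fun h ↦ ?_) ?_ ?_
  · have hN₁ : N₁ K ≤ LinearMap.ker (coordMod K 1) := by
      simp [N₁, sElt_smul_e₀, coordMod_mk_eq_zero_iff]
    simpa [e₁, coordMod_mk_eq_zero_iff, Ideal.one_notMem] using hN₁ h
  · simp [sElt_smul_e₁]
  · rw [tElt_smul_e₁]
    exact neg_mem (Submodule.mem_span_singleton_self _)

lemma e₁_mem_N₂ : e₁ K ∈ N₂ K :=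
  Submodule.mem_sup_left (Submodule.mem_span_singleton_self _)

lemma sElt_smul_e₀_mem_N₂ : sElt K • e₀ K ∈ N₂ K :=
  Submodule.mem_sup_right (Submodule.mem_span_singleton_self _)

lemma sup_N₂_eq_top : (Sring K ∙ e₀ K) ⊔ N₂ K = ⊤ := by
  refine eq_top_iff.2 fun x _ ↦ ?_
  obtain ⟨v, rfl⟩ := Submodule.Quotient.mk_surjective _ x
  have hv : (Submodule.Quotient.mk v : Nmod K) = v 0 • e₀ K + v 1 • e₁ K := by
    rw [e₀, e₁, ← Submodule.Quotient.mk_smul, ← Submodule.Quotient.mk_smul,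
      ← Submodule.Quotient.mk_add]
    congr 1
    ext i; fin_cases i <;> simp
  rw [hv]
  exact add_mem
    (Submodule.mem_sup_left <| Submodule.smul_mem _ _ <| Submodule.mem_span_singleton_self _)
    (Submodule.mem_sup_right <| Submodule.smul_mem _ _ e₁_mem_N₂)

lemma N₂_covBy_top : N₂ K ⋖ ⊤ := by
  rw [← sup_N₂_eq_top]
  refine covBy_span_singleton_sup_of_smul_mem (fun h ↦ ?_) ?_ ?_
  · have hN₂ : N₂ K ≤ LinearMap.ker (coordMod K 0) := by
      simp [N₂, N₁, e₁, sElt_smul_e₀, coordMod_mk_eq_zero_iff, sElt_mem_mIdeal]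
    simpa [e₀, coordMod_mk_eq_zero_iff, Ideal.one_notMem] using hN₂ h
  · exact sElt_smul_e₀_mem_N₂
  · simp [tElt_smul_e₀]

/-- The `S`-module `N = S²/U` has length 3: it admits a composition series of length 3
from `⊥` to `⊤`. -/
theorem stmt_6 (K : Type) [Field K] :
    ∃ c : CompositionSeries (Submodule (Sring K) (Nmod K)),
      c.head = ⊥ ∧ c.last = ⊤ ∧ c.length = 3 := by
  refine ⟨⟨3, ![⊥, N₁ K, N₂ K, ⊤], fun i ↦ ?_⟩, ?_, ?_, rfl⟩
  · fin_cases i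
    exacts [bot_covBy_N₁, N₁_covBy_N₂, N₂_covBy_top]
  · rfl
  · rfl
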